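/- arXiv:math/0006161 — 3 statements merged into one kernel-verified Lean document; each statement's English description precedes it below -/
import Mathlib

section
/- Let (T, η, μ) be a 2-monad on Cat whose unit η is cartesian (componentwise on underlying categories, with naturality squares pullbacks of categories) and such that T preserves the arrow-category cotensor (T(C^→) ≅ (TC)^→ compatibly). Then each component η_C : C → T C is a fully faithful functor. -/
/-!
Base change along the naturality square of `η` at the functor from `C` to the terminal category
exhibits `η_C` as a pullback of a functor out of the terminal category, hence as a monomorphism
of `Cat`. Testing against the walking arrow, a monomorphism of `Cat` is injective on objects and
faithful.

For fullness, let `g : η x ⟶ η y`. The commutative square `(𝟙, g) : 𝟙_{η x} ⟶ g` is an arrow of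
`(TC)^→ ≅ T(C^→)` lying over `𝟙_x` under the domain functor, so the pullback square of `η` at
`d : C^→ ⥤ C` lifts it to an arrow of `C^→`. The codomain component of that lift is an arrow of
`C` which `η` sends to `g`, and injectivity on objects pins down its endpoints as `x` and `y`.
-/

open CategoryTheory

universe u

namespace CategoryTheory

lemma Functor.full_of_injective_of_exists_mapArrow_obj_eq {C D : Type*}
    [Category C] [Category D] (F : C ⥤ D) (hobj : Function.Injective F.obj)
    (hlift : ∀ {x y : C} (g : F.obj x ⟶ F.obj y), ∃ f : Arrow C, F.mapArrow.obj f = Arrow.mk g) :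
    F.Full where
  map_surjective {x y} g := by
    obtain ⟨⟨a, b, f⟩, hf⟩ := hlift g
    obtain ⟨ha, hb, hfg⟩ := (Arrow.mk_eq_mk_iff (F.map f) g).1 hf
    obtain rfl := hobj ha
    obtain rfl := hobj hb
    exact ⟨f, by simpa using hfg⟩

namespace Cat

variable {C D : Type u} [Category.{u} C] [Category.{u} D]

abbrev walkingArrow : Cat.{u, u} := Cat.of (AsSmall.{u} (Fin 2))

def walkingArrowHomEquiv (X : Type u) [Category.{u} X] : (walkingArrow ⟶ Cat.of X) ≃ Arrow X :=
  (Hom.equivFunctor _ _).trans <|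
    ({ toFun := fun F => AsSmall.up ⋙ F
       invFun := fun G => AsSmall.down ⋙ G
       left_inv := fun _ => rfl
       right_inv := fun _ => rfl } : (AsSmall.{u} (Fin 2) ⥤ X) ≃ ComposableArrows X 1).trans
      ComposableArrows.arrowEquiv

lemma walkingArrowHomEquiv_comp (r : walkingArrow ⟶ Cat.of C) (F : C ⥤ D) :
    walkingArrowHomEquiv D (r ≫ F.toCatHom) = F.mapArrow.obj (walkingArrowHomEquiv C r) :=
  rfl

lemma mapArrow_obj_injective_of_mono (F : C ⥤ D) [Mono F.toCatHom] :
    Function.Injective F.mapArrow.obj := fun f₁ f₂ h => by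
  apply (walkingArrowHomEquiv C).symm.injective
  rw [← cancel_mono F.toCatHom]
  apply (walkingArrowHomEquiv D).injective
  simpa only [walkingArrowHomEquiv_comp, Equiv.apply_symm_apply] using h

lemma obj_injective_of_mono (F : C ⥤ D) [Mono F.toCatHom] : Function.Injective F.obj :=
  fun x x' h => by
    have : F.mapArrow.obj (Arrow.mk (𝟙 x)) = F.mapArrow.obj (Arrow.mk (𝟙 x')) := by
      simpa using congrArg (fun z => Arrow.mk (𝟙 z)) h
    exact congrArg Arrow.left (mapArrow_obj_injective_of_mono F this)

lemma faithful_of_mono (F : C ⥤ D) [Mono F.toCatHom] : F.Faithful where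
  map_injective {_ _} a₁ a₂ h :=
    (Arrow.mk_inj _ _).1 (mapArrow_obj_injective_of_mono F (by simp [h]))

lemma exists_mapArrow_obj_eq_of_isPullback {F : C ⥤ D} {Φ : Arrow C ⥤ Arrow D}
    (hpb : IsPullback Φ.toCatHom Arrow.leftFunc.toCatHom Arrow.leftFunc.toCatHom F.toCatHom)
    (hright : Φ.toCatHom ≫ Arrow.rightFunc.toCatHom = Arrow.rightFunc.toCatHom ≫ F.toCatHom)
    {x : C} {y : D} (g : F.obj x ⟶ y) :
    ∃ f : Arrow C, F.mapArrow.obj f = Arrow.mk g := by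
  let m : Arrow.mk (𝟙 (F.obj x)) ⟶ Arrow.mk g := Arrow.homMk (𝟙 _) g
  have hsq : (walkingArrowHomEquiv (Arrow D)).symm (Arrow.mk m) ≫ Arrow.leftFunc.toCatHom =
      (walkingArrowHomEquiv C).symm (Arrow.mk (𝟙 x)) ≫ F.toCatHom := by
    apply (walkingArrowHomEquiv D).injective
    simp only [walkingArrowHomEquiv_comp, Equiv.apply_symm_apply]
    exact (congrArg Arrow.mk (F.map_id x)).symm
  refine ⟨walkingArrowHomEquiv C (hpb.lift _ _ hsq ≫ Arrow.rightFunc.toCatHom), ?_⟩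
  rw [← walkingArrowHomEquiv_comp, Category.assoc, ← hright, ← Category.assoc, hpb.lift_fst,
    walkingArrowHomEquiv_comp, Equiv.apply_symm_apply]
  rfl

end Cat

end CategoryTheory

/-- Let `(T, η, μ)` be a 2-monad on `Cat` whose unit is cartesian (the
naturality squares of `η` are pullbacks of categories) and such that `T`
preserves the cotensor with the arrow category, compatibly with the domain and
codomain functors.  Then each component `η_C : C ⥤ T C` is fully faithful. -/
theorem unit_fullyFaithful_of_cartesian_of_preservesArrowCotensor
    (T : Monad Cat.{u, u})
    (hcart : ∀ {C D : Cat.{u, u}} (f : C ⟶ D),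
      IsPullback (T.η.app C) f (T.map f) (T.η.app D))
    (hhom : ∀ C : Cat.{u, u},
      ∃ e : T.obj (Cat.of (Arrow C)) ≅ Cat.of (Arrow (T.obj C)),
        T.map ((Arrow.leftFunc : Arrow C ⥤ C).toCatHom : Cat.of (Arrow C) ⟶ C) =
          e.hom ≫ ((Arrow.leftFunc : Arrow (T.obj C) ⥤ T.obj C).toCatHom : Cat.of (Arrow (T.obj C)) ⟶ T.obj C) ∧
        T.map ((Arrow.rightFunc : Arrow C ⥤ C).toCatHom : Cat.of (Arrow C) ⟶ C) =
          e.hom ≫ ((Arrow.rightFunc : Arrow (T.obj C) ⥤ T.obj C).toCatHom : Cat.of (Arrow (T.obj C)) ⟶ T.obj C)) :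
    ∀ C : Cat.{u, u}, (T.η.app C).toFunctor.Full ∧ (T.η.app C).toFunctor.Faithful := by
  intro C
  have hpt := Cat.isTerminalDiscretePUnit.{u}
  have : Mono (T.η.app C).toFunctor.toCatHom :=
    (hcart (hpt.from C)).mono_fst_of_mono (hpt.mono_from _)
  obtain ⟨e, hleft, hright⟩ := hhom C
  have hpb : IsPullback (T.η.app _ ≫ e.hom) Arrow.leftFunc.toCatHom Arrow.leftFunc.toCatHom
      (T.η.app C) :=
    (hcart Arrow.leftFunc.toCatHom).of_iso (Iso.refl _) e (Iso.refl _) (Iso.refl _)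
      (Category.id_comp _).symm ((Category.comp_id _).trans (Category.id_comp _).symm)
      ((Category.comp_id _).trans hleft) ((Category.comp_id _).trans (Category.id_comp _).symm)
  have hnat : (T.η.app _ ≫ e.hom) ≫ Arrow.rightFunc.toCatHom =
      Arrow.rightFunc.toCatHom ≫ T.η.app C := by
    rw [Category.assoc, ← hright]
    exact (T.η.naturality _).symm
  exact ⟨Functor.full_of_injective_of_exists_mapArrow_obj_eq _ (Cat.obj_injective_of_mono _)
      fun g => Cat.exists_mapArrow_obj_eq_of_isPullback
        (Φ := (T.η.app _ ≫ e.hom).toFunctor) hpb hnat g,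
    Cat.faithful_of_mono _⟩
end

section
/- Let F ⊣ G be an adjunction l ⊣ r : C → D (l : D → C, r : C → D) in Cat with r fully faithful, with unit η : 1 ⟶ r ∘ l and invertible counit ε. Let q : D → D[η⁻¹] be the localization of D at the components of η, and let l' : D[η⁻¹] → C be the unique functor with l' ∘ q = l. Then l' and q ∘ r form an equivalence of categories between D[η⁻¹] and C. -/
open CategoryTheory

/-! `q` inverts every unit component, so whiskering the unit with `q` gives `q ≅ l ⋙ r ⋙ q`;
as `q` is a localization, precomposition with `q` is fully faithful, and this descends to
`𝟭 E ≅ l' ⋙ r ⋙ q`. The other composite is `r ⋙ l`, which is isomorphic to `𝟭 C` through the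
counit because `r` is fully faithful. -/

/-- The class of morphisms of `D` consisting of the components of the unit of an
adjunction `l ⊣ r`. -/
def unitMorphisms {C D : Type*} [Category C] [Category D]
    (l : D ⥤ C) (r : C ⥤ D) (adj : l ⊣ r) : MorphismProperty D :=
  fun X Y f => ∃ h : Y = r.obj (l.obj X), f ≫ eqToHom h = adj.unit.app X

lemma unitMorphisms_unit_app {C D : Type*} [Category C] [Category D]
    {l : D ⥤ C} {r : C ⥤ D} (adj : l ⊣ r) (X : D) :
    unitMorphisms l r adj (adj.unit.app X) :=
  ⟨rfl, Category.comp_id _⟩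

namespace CategoryTheory.Adjunction

variable {C D E : Type*} [Category C] [Category D] [Category E] {l : D ⥤ C} {r : C ⥤ D}

noncomputable def isoCompOfIsIsoMapUnit (adj : l ⊣ r) {q : D ⥤ E}
    (hq : ∀ X, IsIso (q.map (adj.unit.app X))) : q ≅ l ⋙ r ⋙ q :=
  haveI : IsIso (Functor.whiskerRight adj.unit q) :=
    @NatIso.isIso_of_isIso_app _ _ _ _ _ _ _ hq
  q.leftUnitor.symm ≪≫ asIso (Functor.whiskerRight adj.unit q) ≪≫ Functor.associator _ _ _

end CategoryTheory.Adjunction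

/-- Let `l ⊣ r` be an adjunction with `r` fully faithful, let
`q : D ⥤ E` be the localization of `D` at the components of the unit `η`, and
let `l' : E ⥤ C` be the (unique) functor with `q ⋙ l' = l`.  Then `l'` and
`r ⋙ q` form an equivalence of categories between the localization `E` and
`C`. -/
theorem localization_at_unit_equivalence {C D E : Type*}
    [Category C] [Category D] [Category E]
    (l : D ⥤ C) (r : C ⥤ D) (adj : l ⊣ r) [r.Full] [r.Faithful]
    (q : D ⥤ E) [q.IsLocalization (unitMorphisms l r adj)]
    (l' : E ⥤ C) (hl' : q ⋙ l' = l) :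
    Nonempty (𝟭 E ≅ l' ⋙ r ⋙ q) ∧ Nonempty ((r ⋙ q) ⋙ l' ≅ 𝟭 C) := by
  have hq (X : D) : IsIso (q.map (adj.unit.app X)) :=
    Localization.inverts q (unitMorphisms l r adj) _ (unitMorphisms_unit_app adj X)
  have e : q ⋙ 𝟭 E ≅ q ⋙ l' ⋙ r ⋙ q :=
    q.rightUnitor ≪≫ adj.isoCompOfIsIsoMapUnit hq ≪≫
      Functor.isoWhiskerRight (eqToIso hl'.symm) _ ≪≫ Functor.associator _ _ _
  exact ⟨⟨(Localization.fullyFaithfulWhiskeringLeft q (unitMorphisms l r adj) E).preimageIso e⟩,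
    ⟨Functor.associator _ _ _ ≪≫ Functor.isoWhiskerLeft r (eqToIso hl') ≪≫ asIso adj.counit⟩⟩
end

section
/- Let α : F ⟶ G be a natural transformation between pullback-preserving functors F, G : L → Cat such that every naturality square is a pullback of categories, and let f : x → y be a morphism in L. Then the canonical functor from F x to the comma category α_y ↓ G f (induced by the naturality square α_y ∘ F f = G f ∘ α_x) is the pullback along G f of the canonical functor F y → α_y ↓ G y, and in particular it admits a left adjoint over G x. -/
/-!
Write `p = α_y`, `q = G f` and `ζ` for the comparison functor. The comma category `p ↓ q` is the
strict pullback of `Comma.snd : p ↓ 𝟭 ⥤ G y` along `q`, so the first claim follows by pasting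
with the naturality square at `f`, which is a pullback by hypothesis.

For the adjoint, `F x` is, as a pullback of `p` and `q`, isomorphic to the full subcategory of
`p ↓ q` on the objects whose structure morphism is an identity, and `ζ` becomes its inclusion.
The left adjoint `l₀` of `commaUnit p` yields a reflection onto that subcategory:
`(e, x, φ) ↦ (l₀ (e, q x, κ_e ≫ φ), x)`, where `κ` is the image under `p` of the counit.
The twist by `κ` is needed because `l₀ ⋙ p = Comma.snd` does not force the unit to lie over
identities.
-/

open CategoryTheory

universe u v

/-- The canonical functor `E ⥤ p ↓ 𝟭 B`, sending `e` to `(e, p e, 𝟙)`. -/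
def commaUnit {E B : Type*} [Category E] [Category B] (p : E ⥤ B) :
    E ⥤ Comma p (𝟭 B) where
  obj e := { left := e, right := p.obj e, hom := 𝟙 _ }
  map f := { left := f, right := p.map f, w := by simp }

open Limits

namespace CategoryTheory

/-- `Cat.of` as an abbreviation, so that the category instance on `catOf C` is reducibly the one
on `C`; `simp` needs this to rewrite functors out of `catOf C`. -/
abbrev catOf (C : Type u) [Category.{u} C] : Cat.{u, u} := ⟨C, inferInstance⟩

abbrev Functor.catHom {C D : Type u} [Category.{u} C] [Category.{u} D] (F : C ⥤ D) :
    catOf C ⟶ catOf D := ⟨F⟩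

theorem Cat.isPullback_mk {P E X B : Type u} [Category.{u} P] [Category.{u} E] [Category.{u} X]
    [Category.{u} B] {pf : P ⥤ E} {px : P ⥤ X} {p : E ⥤ B} {q : X ⥤ B} (w : pf ⋙ p = px ⋙ q)
    (lift : ∀ {T : Type u} [Category.{u} T] (a : T ⥤ E) (b : T ⥤ X), a ⋙ p = b ⋙ q → T ⥤ P)
    (lift_fst : ∀ {T : Type u} [Category.{u} T] (a : T ⥤ E) (b : T ⥤ X) (h : a ⋙ p = b ⋙ q),
      lift a b h ⋙ pf = a)
    (lift_snd : ∀ {T : Type u} [Category.{u} T] (a : T ⥤ E) (b : T ⥤ X) (h : a ⋙ p = b ⋙ q),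
      lift a b h ⋙ px = b)
    (hom_ext : ∀ {T : Type u} [Category.{u} T] (m m' : T ⥤ P),
      m ⋙ pf = m' ⋙ pf → m ⋙ px = m' ⋙ px → m = m') :
    IsPullback pf.catHom px.catHom p.catHom q.catHom := by
  refine ⟨⟨Cat.ext w⟩, ⟨PullbackCone.IsLimit.mk _
    (fun s => ⟨lift s.fst.toFunctor s.snd.toFunctor (congrArg Cat.Hom.toFunctor s.condition)⟩)
    (fun s => Cat.ext (lift_fst _ _ _)) (fun s => Cat.ext (lift_snd _ _ _)) fun s m h₁ h₂ => ?_⟩⟩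
  refine Cat.ext (hom_ext _ _ ?_ ?_)
  · rw [lift_fst]; exact congrArg Cat.Hom.toFunctor h₁
  · rw [lift_snd]; exact congrArg Cat.Hom.toFunctor h₂

namespace Comma

section

variable {A B T D : Type*} [Category A] [Category B] [Category T] [Category D]
  {L : A ⥤ T} {R : B ⥤ T}

@[simps]
def lift (F : D ⥤ A) (G : D ⥤ B) (α : F ⋙ L ⟶ G ⋙ R) : D ⥤ Comma L R where
  obj d := ⟨F.obj d, G.obj d, α.app d⟩
  map f := ⟨F.map f, G.map f, α.naturality f⟩

theorem obj_ext {c c' : Comma L R} (hl : c.left = c'.left) (hr : c.right = c'.right)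
    (hhom : c.hom ≍ c'.hom) : c = c' := by
  cases c; cases c'
  cases hl; cases hr; cases hhom
  rfl

theorem functor_ext {M M' : D ⥤ Comma L R}
    (hl : M ⋙ fst L R = M' ⋙ fst L R) (hr : M ⋙ snd L R = M' ⋙ snd L R)
    (hhom : ∀ d, (M.obj d).hom ≍ (M'.obj d).hom) : M = M' := by
  refine Functor.ext (fun d => obj_ext (Functor.congr_obj hl d) (Functor.congr_obj hr d) (hhom d))
    fun d d' f => ?_
  ext
  · simpa using Functor.congr_hom hl f
  · simpa using Functor.congr_hom hr f

/-- Spans the strict pullback of `L` and `R` as a full subcategory of `Comma L R`. -/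
def strict (L : A ⥤ T) (R : B ⥤ T) : ObjectProperty (Comma L R) :=
  fun c => ∃ h : L.obj c.left = R.obj c.right, c.hom = eqToHom h

theorem strict_functor_ext {M M' : D ⥤ (strict L R).FullSubcategory}
    (hl : M ⋙ (strict L R).ι ⋙ fst L R = M' ⋙ (strict L R).ι ⋙ fst L R)
    (hr : M ⋙ (strict L R).ι ⋙ snd L R = M' ⋙ (strict L R).ι ⋙ snd L R) : M = M' := by
  have h : M ⋙ (strict L R).ι = M' ⋙ (strict L R).ι := functor_ext hl hr fun d => by
    obtain ⟨_, hd⟩ := (M.obj d).property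
    obtain ⟨_, hd'⟩ := (M'.obj d).property
    have hleft : (M.obj d).obj.left = (M'.obj d).obj.left := Functor.congr_obj hl d
    change (M.obj d).obj.hom ≍ (M'.obj d).obj.hom
    rw [hd, hd']
    refine (eqToHom_heq_id_dom _ _ _).trans (HEq.trans ?_ (eqToHom_heq_id_dom _ _ _).symm)
    rw [hleft]
  calc M = (strict L R).lift (M ⋙ (strict L R).ι) fun d => (M.obj d).property := rfl
    _ = (strict L R).lift (M' ⋙ (strict L R).ι) fun d => (M'.obj d).property := by congr 1
    _ = M' := rfl

end

variable {A B C T : Type u} [Category.{u} A] [Category.{u} B] [Category.{u} C] [Category.{u} T]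

theorem isPullback_preRight (L : A ⥤ T) (F : C ⥤ B) (R : B ⥤ T) :
    IsPullback (preRight L F R).catHom (snd L (F ⋙ R)).catHom (snd L R).catHom F.catHom := by
  refine Cat.isPullback_mk rfl
    (fun a b h => lift (a ⋙ fst L R) b
      (Functor.whiskerLeft a (natTrans L R) ≫ eqToHom (congrArg (· ⋙ R) h)))
    (fun a b h => functor_ext rfl h.symm fun t => by
      simp only [Functor.comp_obj, preRight_obj_hom, lift_obj_hom, NatTrans.comp_app, eqToHom_app]
      exact comp_eqToHom_heq _ _)
    (fun _ _ _ => rfl)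
    fun m m' h₁ h₂ => functor_ext (congrArg (· ⋙ fst L R) h₁) h₂ fun t =>
      (congr_arg_heq hom (Functor.congr_obj h₁ t) :)

theorem isPullback_strict (L : A ⥤ T) (R : B ⥤ T) :
    IsPullback ((strict L R).ι ⋙ fst L R).catHom ((strict L R).ι ⋙ snd L R).catHom
      L.catHom R.catHom := by
  refine Cat.isPullback_mk ?_
    (fun a b h => (strict L R).lift (lift a b (eqToHom h)) fun t => ⟨_, eqToHom_app h t⟩)
    (fun _ _ _ => rfl) (fun _ _ _ => rfl) fun _ _ => strict_functor_ext
  refine Functor.ext (fun c => c.property.choose) fun c c' f => ?_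
  obtain ⟨h, hc⟩ := c.property
  obtain ⟨h', hc'⟩ := c'.property
  have hf := f.hom.w
  rw [hc, hc'] at hf
  change L.map f.hom.left = eqToHom h ≫ R.map f.hom.right ≫ eqToHom h'.symm
  rw [← Category.assoc, ← hf]
  simp

end Comma

section Reflection

variable {E B X : Type*} [Category E] [Category B] [Category X]

def fullyFaithfulCommaUnit (p : E ⥤ B) : (commaUnit p).FullyFaithful where
  preimage f := f.left
  map_preimage f := by
    ext
    · rfl
    · have h : p.map f.left ≫ 𝟙 _ = 𝟙 _ ≫ f.right := f.w
      rw [Category.comp_id, Category.id_comp] at h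
      exact h

instance (p : E ⥤ B) : (commaUnit p).Full := (fullyFaithfulCommaUnit p).full

instance (p : E ⥤ B) : (commaUnit p).Faithful := (fullyFaithfulCommaUnit p).faithful

namespace Adjunction

variable {p : E ⥤ B} {l₀ : Comma p (𝟭 B) ⥤ E} (adj₀ : l₀ ⊣ commaUnit p)

-- The components of the unit, typed without `(commaUnit p).obj _`, which is not reducible.
def unitLeft (d : Comma p (𝟭 B)) : d.left ⟶ l₀.obj d := (adj₀.unit.app d).left

def unitRight (d : Comma p (𝟭 B)) : d.right ⟶ p.obj (l₀.obj d) := (adj₀.unit.app d).right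

theorem map_unitLeft (d : Comma p (𝟭 B)) :
    p.map (adj₀.unitLeft d) = d.hom ≫ adj₀.unitRight d := by
  have h : p.map (adj₀.unitLeft d) ≫ 𝟙 _ = d.hom ≫ adj₀.unitRight d := (adj₀.unit.app d).w
  rwa [Category.comp_id] at h

theorem homEquiv_apply_left {d : Comma p (𝟭 B)} {e : E} (m : l₀.obj d ⟶ e) :
    (adj₀.homEquiv d e m).left = adj₀.unitLeft d ≫ m := by
  rw [homEquiv_unit]; rfl

theorem homEquiv_apply_right {d : Comma p (𝟭 B)} {e : E} (m : l₀.obj d ⟶ e) :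
    (adj₀.homEquiv d e m).right = adj₀.unitRight d ≫ p.map m := by
  rw [homEquiv_unit]; rfl

theorem commaUnit_hom_ext {d : Comma p (𝟭 B)} {e : E} {m m' : l₀.obj d ⟶ e}
    (hl : adj₀.unitLeft d ≫ m = adj₀.unitLeft d ≫ m') (hp : p.map m = p.map m') : m = m' :=
  (adj₀.homEquiv d e).injective <| by
    ext
    · rw [homEquiv_apply_left, homEquiv_apply_left, hl]
    · rw [homEquiv_apply_right, homEquiv_apply_right, hp]

variable (hl₀ : l₀ ⋙ p = Comma.snd p (𝟭 B))

/-- The automorphism `κ` of `p` that measures how far the unit of `adj₀` is from lying over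
identities (see `unitRight_comp_baseCounit`). -/
def baseCounit : p ⟶ p :=
  eqToHom (show p = (commaUnit p ⋙ l₀) ⋙ p by rw [Functor.assoc, hl₀]; rfl) ≫
    Functor.whiskerRight adj₀.counit p

instance : IsIso (adj₀.baseCounit hl₀) := by
  unfold baseCounit
  infer_instance

theorem map_homEquiv_symm {d : Comma p (𝟭 B)} {e : E} (g : d ⟶ (commaUnit p).obj e) :
    p.map ((adj₀.homEquiv d e).symm g) =
      eqToHom (Functor.congr_obj hl₀ d) ≫ g.right ≫ (adj₀.baseCounit hl₀).app e := by
  have hg := Functor.congr_hom hl₀ g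
  simp only [Functor.comp_map, Comma.snd_map] at hg
  rw [adj₀.homEquiv_counit, p.map_comp, hg]
  simp [baseCounit, eqToHom_app]
  rfl

theorem unitRight_comp_baseCounit (d : Comma p (𝟭 B)) :
    adj₀.unitRight d ≫ (adj₀.baseCounit hl₀).app (l₀.obj d) =
      eqToHom (Functor.congr_obj hl₀ d).symm := by
  have h := adj₀.map_homEquiv_symm hl₀ (adj₀.homEquiv d (l₀.obj d) (𝟙 _))
  rw [Equiv.symm_apply_apply, p.map_id, homEquiv_apply_right, p.map_id, Category.comp_id, eq_comm,
    eqToHom_comp_iff] at h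
  exact h.trans (Category.comp_id _)

variable (q : X ⥤ B)

abbrev twistObj (c : Comma p q) : Comma p (𝟭 B) :=
  ⟨c.left, q.obj c.right, (adj₀.baseCounit hl₀).app c.left ≫ c.hom⟩

theorem obj_twistObj (c : Comma p q) : p.obj (l₀.obj (adj₀.twistObj hl₀ q c)) = q.obj c.right :=
  Functor.congr_obj hl₀ _

theorem map_unitLeft_twistObj (c : Comma p q) :
    p.map (adj₀.unitLeft (adj₀.twistObj hl₀ q c)) =
      c.hom ≫ eqToHom (adj₀.obj_twistObj hl₀ q c).symm := by
  apply (cancel_epi ((adj₀.baseCounit hl₀).app c.left)).1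
  refine ((adj₀.baseCounit hl₀).naturality (adj₀.unitLeft (adj₀.twistObj hl₀ q c))).symm.trans ?_
  rw [map_unitLeft, Category.assoc, unitRight_comp_baseCounit]
  exact Category.assoc _ _ _

def strictReflectionObj (c : Comma p q) : (Comma.strict p q).FullSubcategory :=
  ⟨⟨l₀.obj (adj₀.twistObj hl₀ q c), c.right, eqToHom (adj₀.obj_twistObj hl₀ q c)⟩,
    adj₀.obj_twistObj hl₀ q c, rfl⟩

def strictReflectionUnit (c : Comma p q) :
    c ⟶ (Comma.strict p q).ι.obj (adj₀.strictReflectionObj hl₀ q c) where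
  left := adj₀.unitLeft (adj₀.twistObj hl₀ q c)
  right := 𝟙 c.right
  w := by
    change p.map (adj₀.unitLeft (adj₀.twistObj hl₀ q c)) ≫
      eqToHom (adj₀.obj_twistObj hl₀ q c) = c.hom ≫ q.map (𝟙 c.right)
    rw [map_unitLeft_twistObj, q.map_id, Category.comp_id, Category.assoc, eqToHom_trans,
      eqToHom_refl, Category.comp_id]

theorem strictReflectionUnit_comp_injective (c : Comma p q)
    (s : (Comma.strict p q).FullSubcategory) :
    Function.Injective fun μ : adj₀.strictReflectionObj hl₀ q c ⟶ s =>
      adj₀.strictReflectionUnit hl₀ q c ≫ μ.hom := by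
  obtain ⟨⟨e, x, φ⟩, hs, hφ⟩ := s
  dsimp only at hs hφ
  subst hφ
  intro μ μ' h
  have hr : μ.hom.right = μ'.hom.right :=
    (Category.id_comp _).symm.trans ((congrArg CommaMorphism.right h).trans (Category.id_comp _))
  have hp : p.map μ.hom.left = p.map μ'.hom.left := by
    rw [← cancel_mono (eqToHom hs)]
    exact μ.hom.w.trans ((congrArg (_ ≫ q.map ·) hr).trans μ'.hom.w.symm)
  exact ObjectProperty.hom_ext _ (Comma.hom_ext _ _
    (adj₀.commaUnit_hom_ext (congrArg CommaMorphism.left h) hp) hr)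

theorem strictReflectionUnit_comp_surjective (c : Comma p q)
    (s : (Comma.strict p q).FullSubcategory) :
    Function.Surjective fun μ : adj₀.strictReflectionObj hl₀ q c ⟶ s =>
      adj₀.strictReflectionUnit hl₀ q c ≫ μ.hom := by
  obtain ⟨⟨e, x, φ⟩, hs, hφ⟩ := s
  dsimp only at hs hφ
  subst hφ
  intro ν
  have hν : p.map ν.left ≫ eqToHom hs = c.hom ≫ q.map ν.right := ν.w
  set κ := adj₀.baseCounit hl₀
  -- The preimage is the transpose of `(ν.left, k) : twistObj c ⟶ (commaUnit p).obj e`.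
  set k : q.obj c.right ⟶ p.obj e := q.map ν.right ≫ eqToHom hs.symm ≫ inv (κ.app e) with hk
  have hck : c.hom ≫ k = p.map ν.left ≫ inv (κ.app e) := by
    rw [hk, ← Category.assoc, ← hν]
    simp
  let χ : adj₀.twistObj hl₀ q c ⟶ (commaUnit p).obj e := ⟨ν.left, k, by
    change p.map ν.left ≫ 𝟙 _ = (κ.app c.left ≫ c.hom) ≫ k
    rw [Category.assoc, hck, ← Category.assoc, ← κ.naturality, Category.assoc, IsIso.hom_inv_id]⟩
  refine ⟨ObjectProperty.homMk ⟨(adj₀.homEquiv _ e).symm χ, ν.right, ?_⟩, ?_⟩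
  · change p.map ((adj₀.homEquiv _ e).symm χ) ≫ eqToHom hs =
      eqToHom (adj₀.obj_twistObj hl₀ q c) ≫ q.map ν.right
    rw [map_homEquiv_symm _ hl₀]
    change (eqToHom _ ≫ k ≫ κ.app e) ≫ eqToHom hs = _
    simp [hk]
  · ext
    · change adj₀.unitLeft _ ≫ (adj₀.homEquiv _ e).symm χ = ν.left
      rw [← homEquiv_apply_left, Equiv.apply_symm_apply]
    · exact Category.id_comp _

noncomputable def strictReflectionHomEquiv (c : Comma p q)
    (s : (Comma.strict p q).FullSubcategory) :
    (adj₀.strictReflectionObj hl₀ q c ⟶ s) ≃ (c ⟶ (Comma.strict p q).ι.obj s) :=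
  Equiv.ofBijective _ ⟨adj₀.strictReflectionUnit_comp_injective hl₀ q c s,
    adj₀.strictReflectionUnit_comp_surjective hl₀ q c s⟩

noncomputable def strictReflection : Comma p q ⥤ (Comma.strict p q).FullSubcategory :=
  leftAdjointOfEquiv (adj₀.strictReflectionHomEquiv hl₀ q) fun c _ _ g μ =>
    (Category.assoc (adj₀.strictReflectionUnit hl₀ q c) μ.hom g.hom).symm

noncomputable def strictReflectionAdjunction :
    adj₀.strictReflection hl₀ q ⊣ (Comma.strict p q).ι :=
  adjunctionOfEquivLeft _ _

theorem strictReflection_comp_ι_comp_snd :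
    adj₀.strictReflection hl₀ q ⋙ (Comma.strict p q).ι ⋙ Comma.snd p q = Comma.snd p q := by
  refine Functor.ext (fun _ => rfl) fun c c' f => ?_
  have h : adj₀.strictReflectionUnit hl₀ q c ≫ ((adj₀.strictReflection hl₀ q).map f).hom =
      f ≫ adj₀.strictReflectionUnit hl₀ q c' ≫ 𝟙 _ :=
    (adj₀.strictReflectionHomEquiv hl₀ q c _).apply_symm_apply _
  have hr : 𝟙 _ ≫ ((adj₀.strictReflection hl₀ q).map f).hom.right = f.right ≫ 𝟙 _ ≫ 𝟙 _ :=
    congrArg CommaMorphism.right h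
  rw [Category.id_comp, Category.id_comp, Category.comp_id] at hr
  exact hr.trans ((Category.comp_id _).symm.trans (Category.id_comp _).symm)

end Adjunction

end Reflection

section PullbackSquare

variable {P E X B : Type u} [Category.{u} P] [Category.{u} E] [Category.{u} X] [Category.{u} B]
  {pf : P ⥤ E} {px : P ⥤ X} {p : E ⥤ B} {q : X ⥤ B}

theorem isPullback_lift_commaUnit (w : pf ⋙ p = px ⋙ q)
    (hPB : IsPullback pf.catHom px.catHom p.catHom q.catHom) :
    IsPullback pf.catHom (Comma.lift pf px (eqToHom w)).catHom (commaUnit p).catHom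
      (Comma.preRight p q (𝟭 B)).catHom := by
  refine IsPullback.of_bot hPB (Cat.ext (Comma.functor_ext rfl w fun e => ?_))
    (Comma.isPullback_preRight p q (𝟭 B))
  change 𝟙 _ ≍ (eqToHom w).app e
  rw [eqToHom_app]
  exact (eqToHom_heq_id_dom _ _ _).symm

theorem exists_leftAdjoint_lift_comp_eq_snd (w : pf ⋙ p = px ⋙ q)
    (hPB : IsPullback pf.catHom px.catHom p.catHom q.catHom)
    {l₀ : Comma p (𝟭 B) ⥤ E} (adj₀ : l₀ ⊣ commaUnit p) (hl₀ : l₀ ⋙ p = Comma.snd p (𝟭 B)) :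
    ∃ l : Comma p q ⥤ P, Nonempty (l ⊣ Comma.lift pf px (eqToHom w)) ∧ l ⋙ px = Comma.snd p q := by
  let iso := hPB.isoIsPullback _ _ (Comma.isPullback_strict p q)
  have hiso : iso.hom = ((Comma.strict p q).lift (Comma.lift pf px (eqToHom w))
      fun e => ⟨_, eqToHom_app w e⟩).catHom :=
    (Comma.isPullback_strict p q).hom_ext (by simp [iso]; rfl) (by simp [iso]; rfl)
  let e := Cat.equivOfIso iso
  refine ⟨adj₀.strictReflection hl₀ q ⋙ e.inverse,
    ⟨((adj₀.strictReflectionAdjunction hl₀ q).comp e.symm.toAdjunction).ofNatIsoRight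
      (eqToIso ?_)⟩, ?_⟩
  · change iso.hom.toFunctor ⋙ _ = _
    rw [hiso]
    rfl
  · change _ ⋙ (iso.inv ≫ px.catHom).toFunctor = _
    rw [IsPullback.isoIsPullback_inv_snd]
    exact adj₀.strictReflection_comp_ι_comp_snd hl₀ q

end PullbackSquare

end CategoryTheory

section

variable {L : Type v} [Category L] (F G : L ⥤ Cat.{u, u}) (α : F ⟶ G)
  {x y : L} (f : x ⟶ y)

/-- The canonical comparison functor `F x ⥤ α_y ↓ G f` induced by the
naturality square `α_y ∘ F f = G f ∘ α_x`. -/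
def zetaFunctor :
    (F.obj x : Type u) ⥤ Comma ((α.app y).toFunctor : ↑(F.obj y) ⥤ ↑(G.obj y)) ((G.map f).toFunctor : ↑(G.obj x) ⥤ ↑(G.obj y)) where
  obj e :=
    { left := (F.map f).toFunctor.obj e
      right := (α.app x).toFunctor.obj e
      hom := eqToHom (Functor.congr_obj (congrArg Cat.Hom.toFunctor (α.naturality f)) e) }
  map u :=
    { left := (F.map f).toFunctor.map u
      right := (α.app x).toFunctor.map u
      w := by
        have h := Functor.congr_hom (congrArg Cat.Hom.toFunctor (α.naturality f)) u
        simp only [Cat.Hom.comp_toFunctor, Functor.comp_obj, Functor.comp_map] at h ⊢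
        simp [h] }
  map_id := by
    intros; apply CommaMorphism.ext <;> simp
  map_comp := by
    intros; apply CommaMorphism.ext <;> simp

/-- The functor `α_y ↓ G f ⥤ α_y ↓ G y` given by postcomposition with `G f`
on the second component. -/
def commaExtend :
    Comma ((α.app y).toFunctor : ↑(F.obj y) ⥤ ↑(G.obj y)) ((G.map f).toFunctor : ↑(G.obj x) ⥤ ↑(G.obj y)) ⥤
      Comma ((α.app y).toFunctor : ↑(F.obj y) ⥤ ↑(G.obj y)) (𝟭 (G.obj y)) where
  obj c := { left := c.left, right := (G.map f).toFunctor.obj c.right, hom := c.hom }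
  map u := { left := u.left, right := (G.map f).toFunctor.map u.right, w := by simpa using u.w }

/-- The above functors, as morphisms of `Cat`. -/
def zetaCat : F.obj x ⟶ Cat.of (Comma ((α.app y).toFunctor : ↑(F.obj y) ⥤ ↑(G.obj y)) ((G.map f).toFunctor : ↑(G.obj x) ⥤ ↑(G.obj y))) :=
  (zetaFunctor F G α f).toCatHom

def commaUnitCat : F.obj y ⟶ Cat.of (Comma ((α.app y).toFunctor : ↑(F.obj y) ⥤ ↑(G.obj y)) (𝟭 (G.obj y))) :=
  (commaUnit ((α.app y).toFunctor : ↑(F.obj y) ⥤ ↑(G.obj y))).toCatHom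

def commaExtendCat :
    Cat.of (Comma ((α.app y).toFunctor : ↑(F.obj y) ⥤ ↑(G.obj y)) ((G.map f).toFunctor : ↑(G.obj x) ⥤ ↑(G.obj y))) ⟶
      Cat.of (Comma ((α.app y).toFunctor : ↑(F.obj y) ⥤ ↑(G.obj y)) (𝟭 (G.obj y))) :=
  (commaExtend F G α f).toCatHom

theorem zeta_isPullback_and_hasLeftAdjoint
    (hcart : ∀ {a b : L} (g : a ⟶ b),
      IsPullback (F.map g) (α.app a) (α.app b) (G.map g))
    (hη : ∃ l₀ : Comma ((α.app y).toFunctor : ↑(F.obj y) ⥤ ↑(G.obj y)) (𝟭 (G.obj y)) ⥤ (F.obj y : Type u),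
      Nonempty (l₀ ⊣ commaUnit ((α.app y).toFunctor : ↑(F.obj y) ⥤ ↑(G.obj y))) ∧
        l₀ ⋙ ((α.app y).toFunctor : ↑(F.obj y) ⥤ ↑(G.obj y)) =
          Comma.snd ((α.app y).toFunctor : ↑(F.obj y) ⥤ ↑(G.obj y)) (𝟭 (G.obj y))) :
    IsPullback (F.map f) (zetaCat F G α f) (commaUnitCat F G α (y := y)) (commaExtendCat F G α f) ∧
    ∃ l : Comma ((α.app y).toFunctor : ↑(F.obj y) ⥤ ↑(G.obj y)) ((G.map f).toFunctor : ↑(G.obj x) ⥤ ↑(G.obj y)) ⥤ (F.obj x : Type u),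
      Nonempty (l ⊣ zetaFunctor F G α f) ∧
        l ⋙ ((α.app x).toFunctor : ↑(F.obj x) ⥤ ↑(G.obj x)) =
          Comma.snd ((α.app y).toFunctor : ↑(F.obj y) ⥤ ↑(G.obj y)) ((G.map f).toFunctor : ↑(G.obj x) ⥤ ↑(G.obj y)) := by
  obtain ⟨l₀, ⟨adj₀⟩, hl₀⟩ := hη
  have w := congrArg Cat.Hom.toFunctor (α.naturality f)
  have hζ : zetaFunctor F G α f =
      Comma.lift (F.map f).toFunctor (α.app x).toFunctor (eqToHom w) :=
    Comma.functor_ext rfl rfl fun e => heq_of_eq (eqToHom_app w e).symm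
  refine ⟨?_, ?_⟩
  · rw [zetaCat, hζ]
    exact isPullback_lift_commaUnit w (hcart f)
  · rw [hζ]
    exact exists_leftAdjoint_lift_comp_eq_snd w (hcart f) adj₀ hl₀

end
end
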